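/- Let $P \subset \mathbb{R}^n$ be a compact convex polytope with nonempty interior and let $F \subsetneq \partial P$ be a closed subset of its boundary which is homeomorphic to a closed hemisphere of the sphere $S^{n-1}$ under a homeomorphism $\partial P \simeq S^{n-1}$. Then $P \setminus F$ is homeomorphic to a closed half-space in $\mathbb{R}^n$. -/

import Mathlib

/-!
A homeomorphism `g` of the ambient space carrying the convex body `P` onto the closed unit ball
(gauge rescaling) identifies `∂P` with the unit sphere. Composing `g` with the cone
`x ↦ ‖x‖ • h (x / ‖x‖)` over the sphere homeomorphism `h = e ∘ g⁻¹` gives a homeomorphism of the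
ambient space that carries `P` onto the ball and `F` onto the closed upper hemisphere. It remains
to see that the closed ball minus a closed hemisphere is a closed half-space: straighten every
chord parallel to the axis, a half-open segment `[-c, c)`, onto the ray `[0, ∞)`, and then stretch
the open unit ball of the orthogonal hyperplane onto the whole hyperplane.
-/

open Metric Set
open scoped RealInnerProductSpace

section ConeExtension

variable {E : Type*} [NormedAddCommGroup E] [NormedSpace ℝ E]

lemma inv_norm_smul_mem_sphere {x : E} (hx : x ≠ 0) : ‖x‖⁻¹ • x ∈ sphere (0 : E) 1 := by
  simp [norm_smul, hx]

open scoped Classical in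
noncomputable def coneMap (h : sphere (0 : E) 1 → sphere (0 : E) 1) (x : E) : E :=
  if hx : x = 0 then 0 else ‖x‖ • (h ⟨‖x‖⁻¹ • x, inv_norm_smul_mem_sphere hx⟩ : E)

lemma norm_coneMap (h : sphere (0 : E) 1 → sphere (0 : E) 1) (x : E) : ‖coneMap h x‖ = ‖x‖ := by
  by_cases hx : x = 0
  · simp [coneMap, hx]
  · simp [coneMap, hx, norm_smul]

lemma coneMap_of_mem_sphere (h : sphere (0 : E) 1 → sphere (0 : E) 1) {x : E}
    (hx : x ∈ sphere (0 : E) 1) : coneMap h x = h ⟨x, hx⟩ := by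
  simp [coneMap, ne_of_mem_sphere hx one_ne_zero, mem_sphere_zero_iff_norm.1 hx]

lemma coneMap_id (x : E) : coneMap id x = x := by
  by_cases hx : x = 0
  · simp [coneMap, hx]
  · simp [coneMap, hx, smul_smul]

lemma coneMap_coneMap (g h : sphere (0 : E) 1 → sphere (0 : E) 1) (x : E) :
    coneMap g (coneMap h x) = coneMap (g ∘ h) x := by
  by_cases hx : x = 0
  · simp [coneMap, hx]
  set y := h ⟨‖x‖⁻¹ • x, inv_norm_smul_mem_sphere hx⟩
  have hhx : coneMap h x = ‖x‖ • (y : E) := dif_neg hx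
  have hhx0 : coneMap h x ≠ 0 := by
    rw [← norm_ne_zero_iff, norm_coneMap]
    exact norm_ne_zero_iff.2 hx
  have hy : (⟨‖coneMap h x‖⁻¹ • coneMap h x, inv_norm_smul_mem_sphere hhx0⟩ :
      sphere (0 : E) 1) = y := by
    ext1
    change ‖coneMap h x‖⁻¹ • coneMap h x = y
    rw [norm_coneMap, hhx, smul_smul, inv_mul_cancel₀ (norm_ne_zero_iff.2 hx), one_smul]
  rw [coneMap, dif_neg hhx0, hy, norm_coneMap, coneMap, dif_neg hx]
  rfl

lemma continuous_coneMap {h : sphere (0 : E) 1 → sphere (0 : E) 1} (hh : Continuous h) :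
    Continuous (coneMap h) := by
  refine continuous_iff_continuousAt.2 fun x ↦ ?_
  by_cases hx : x = 0
  · subst hx
    rw [ContinuousAt, show coneMap h 0 = 0 by simp [coneMap], tendsto_zero_iff_norm_tendsto_zero]
    simpa [norm_coneMap] using (continuous_norm (E := E)).tendsto 0
  suffices ContinuousOn (coneMap h) {0}ᶜ from
    this.continuousAt (isOpen_compl_singleton.mem_nhds hx)
  rw [continuousOn_iff_continuous_domRestrict]
  have hf : ({0}ᶜ : Set E).domRestrict (coneMap h) = fun y : ({0}ᶜ : Set E) ↦
      ‖(y : E)‖ • (h ⟨‖(y : E)‖⁻¹ • (y : E), inv_norm_smul_mem_sphere y.2⟩ : E) :=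
    funext fun y ↦ dif_neg y.2
  have hn : Continuous fun y : ({0}ᶜ : Set E) ↦ ‖(y : E)‖ := by fun_prop
  rw [hf]
  exact hn.smul (continuous_subtype_val.comp (hh.comp (Continuous.subtype_mk
    ((hn.inv₀ fun y ↦ norm_ne_zero_iff.2 y.2).smul continuous_subtype_val) _)))

noncomputable def Homeomorph.coneExtension (h : sphere (0 : E) 1 ≃ₜ sphere (0 : E) 1) :
    E ≃ₜ E where
  toFun := coneMap h
  invFun := coneMap h.symm
  left_inv x := by simp [coneMap_coneMap, coneMap_id]
  right_inv x := by simp [coneMap_coneMap, coneMap_id]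
  continuous_toFun := continuous_coneMap h.continuous
  continuous_invFun := continuous_coneMap h.symm.continuous

lemma Homeomorph.coneExtension_image_closedBall (h : sphere (0 : E) 1 ≃ₜ sphere (0 : E) 1) :
    coneExtension h '' closedBall 0 1 = closedBall 0 1 := by
  rw [(coneExtension h).image_eq_preimage_symm]
  ext x
  simp [coneExtension, norm_coneMap]

theorem Convex.exists_homeomorph_image_closure_eq_closedBall_extending
    {P : Set E} (hc : Convex ℝ P) (hne : (interior P).Nonempty) (hb : Bornology.IsBounded P)
    (e : frontier P ≃ₜ sphere (0 : E) 1) :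
    ∃ Φ : E ≃ₜ E, Φ '' closure P = closedBall 0 1 ∧ ∀ x : frontier P, Φ x = e x := by
  obtain ⟨g, -, hgP, hgF⟩ := exists_homeomorph_image_interior_closure_frontier_eq_unitBall hc hne hb
  let gF : frontier P ≃ₜ sphere (0 : E) 1 := (g.image _).trans (.setCongr hgF)
  refine ⟨g.trans (.coneExtension (gF.symm.trans e)), ?_, fun x ↦ ?_⟩
  · rw [← Homeomorph.coneExtension_image_closedBall (gF.symm.trans e), ← hgP, image_image]
    rfl
  · have hx : g x ∈ sphere (0 : E) 1 := hgF ▸ mem_image_of_mem g x.2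
    change coneMap _ (g x) = _
    rw [coneMap_of_mem_sphere _ hx, show (⟨g x, hx⟩ : sphere (0 : E) 1) = gF x from rfl]
    simp

end ConeExtension

section HalfSpaceModel

variable {E : Type*} [NormedAddCommGroup E] [InnerProductSpace ℝ E] {u : E}

def orthPart (u x : E) : E := x - ⟪u, x⟫ • u

def halfSpace (u : E) : Set E := {x | 0 ≤ ⟪u, x⟫}

/-- Half the length of the chord of the closed unit ball through `x` parallel to the unit
vector `u`. -/
noncomputable def ballHeight (u x : E) : ℝ := √(1 - ‖orthPart u x‖ ^ 2)

lemma inner_smul_add_orthPart (u x : E) : ⟪u, x⟫ • u + orthPart u x = x := by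
  simp [orthPart]

@[fun_prop]
lemma continuous_orthPart (u : E) : Continuous (orthPart u) := by
  unfold orthPart; fun_prop

@[fun_prop]
lemma continuous_ballHeight (u : E) : Continuous (ballHeight u) := by
  unfold ballHeight; fun_prop

lemma ballHeight_pos {x : E} (hx : ‖orthPart u x‖ < 1) : 0 < ballHeight u x :=
  Real.sqrt_pos.2 (by nlinarith [norm_nonneg (orthPart u x)])

variable (hu : ‖u‖ = 1)
include hu

lemma inner_orthPart (x : E) : ⟪u, orthPart u x⟫ = 0 := by
  simp [orthPart, inner_sub_right, real_inner_smul_right, hu]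

lemma inner_smul_orthPart (b : ℝ) (x : E) : ⟪u, b • orthPart u x⟫ = 0 := by
  rw [real_inner_smul_right, inner_orthPart hu, mul_zero]

lemma inner_smul_add {w : E} (hw : ⟪u, w⟫ = 0) (a : ℝ) : ⟪u, a • u + w⟫ = a := by
  simp [inner_add_right, real_inner_smul_right, hu, hw]

lemma orthPart_smul_add {w : E} (hw : ⟪u, w⟫ = 0) (a : ℝ) : orthPart u (a • u + w) = w := by
  rw [orthPart, inner_smul_add hu hw]
  abel

lemma ballHeight_smul_add_orthPart (a : ℝ) (x : E) :
    ballHeight u (a • u + orthPart u x) = ballHeight u x := by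
  rw [ballHeight, ballHeight, orthPart_smul_add hu (inner_orthPart hu x)]

lemma norm_smul_add_sq {w : E} (hw : ⟪u, w⟫ = 0) (a : ℝ) :
    ‖a • u + w‖ ^ 2 = a ^ 2 + ‖w‖ ^ 2 := by
  rw [norm_add_sq_real, real_inner_smul_left, hw, norm_smul, hu]
  simp

lemma norm_sq_eq_inner_sq_add (x : E) : ‖x‖ ^ 2 = ⟪u, x⟫ ^ 2 + ‖orthPart u x‖ ^ 2 := by
  conv_lhs => rw [← inner_smul_add_orthPart u x]
  exact norm_smul_add_sq hu (inner_orthPart hu x) _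

lemma mem_ballDiffHemisphere_iff (x : E) :
    x ∈ closedBall 0 1 \ (sphere 0 1 ∩ halfSpace u) ↔
      ‖orthPart u x‖ < 1 ∧ -ballHeight u x ≤ ⟪u, x⟫ ∧ ⟪u, x⟫ < ballHeight u x := by
  have hx := norm_sq_eq_inner_sq_add hu x
  have hr := norm_nonneg (orthPart u x)
  set s := ⟪u, x⟫
  set r := ‖orthPart u x‖
  have hc : r ≤ 1 → ballHeight u x ^ 2 = 1 - r ^ 2 := fun h ↦ Real.sq_sqrt (by nlinarith)
  have hc0 : 0 ≤ ballHeight u x := Real.sqrt_nonneg _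
  simp only [mem_sdiff, mem_closedBall_zero_iff, mem_inter_iff, mem_sphere_zero_iff_norm,
    halfSpace, mem_ofPred_eq, ← sq_le_one_iff₀ (norm_nonneg x),
    ← pow_eq_one_iff_of_nonneg (norm_nonneg x) two_ne_zero, hx]
  constructor
  · rintro ⟨hle, hne⟩
    have hr1 : r < 1 :=
      lt_of_le_of_ne (by nlinarith) fun h ↦ hne ⟨by nlinarith, by nlinarith⟩
    have := hc hr1.le
    exact ⟨hr1, by nlinarith,
      lt_of_le_of_ne (by nlinarith) fun h ↦ hne ⟨by nlinarith, by nlinarith⟩⟩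
  · rintro ⟨hr1, hlo, hhi⟩
    have := hc hr1.le
    exact ⟨by nlinarith, fun ⟨h1, h2⟩ ↦ by nlinarith⟩

/-- On the chord with half-length `c`, the Möbius map `s ↦ (c + s) / (c - s)` sends `[-c, c)`
onto `[0, ∞)`. -/
noncomputable def straightenBall : PartialHomeomorph E E where
  toFun x := ((ballHeight u x + ⟪u, x⟫) / (ballHeight u x - ⟪u, x⟫)) • u + orthPart u x
  invFun y := (ballHeight u y * ((⟪u, y⟫ - 1) / (⟪u, y⟫ + 1))) • u + orthPart u y
  source := closedBall 0 1 \ (sphere 0 1 ∩ halfSpace u)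
  target := {x | ‖orthPart u x‖ < 1} ∩ halfSpace u
  map_source' x hx := by
    obtain ⟨hr, hlo, hhi⟩ := (mem_ballDiffHemisphere_iff hu x).1 hx
    have h := inner_orthPart hu x
    refine ⟨by simpa [orthPart_smul_add hu h] using hr, ?_⟩
    rw [halfSpace, mem_ofPred_eq, inner_smul_add hu h]
    exact div_nonneg (by linarith) (by linarith)
  map_target' y := by
    rintro ⟨hr, ht⟩
    have h := inner_orthPart hu y
    have hc := ballHeight_pos hr
    have ht : 0 ≤ ⟪u, y⟫ := ht
    rw [mem_ballDiffHemisphere_iff hu, inner_smul_add hu h, orthPart_smul_add hu h,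
      ballHeight_smul_add_orthPart hu]
    have hq : (⟪u, y⟫ - 1) / (⟪u, y⟫ + 1) < 1 := by rw [div_lt_one (by linarith)]; linarith
    have hq' : -1 ≤ (⟪u, y⟫ - 1) / (⟪u, y⟫ + 1) := by rw [le_div_iff₀ (by linarith)]; linarith
    exact ⟨hr, by nlinarith, by nlinarith⟩
  left_inv' x hx := by
    obtain ⟨hr, hlo, hhi⟩ := (mem_ballDiffHemisphere_iff hu x).1 hx
    have h := inner_orthPart hu x
    simp only [inner_smul_add hu h, orthPart_smul_add hu h, ballHeight_smul_add_orthPart hu]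
    have hc := (ballHeight_pos hr).ne'
    have hcs : ballHeight u x - ⟪u, x⟫ ≠ 0 := by linarith
    conv_rhs => rw [← inner_smul_add_orthPart u x]
    congr 2
    rw [div_add_one hcs, div_sub_one hcs, div_div_div_cancel_right₀ hcs]
    ring_nf
    field_simp
  right_inv' y hy := by
    have ht : 0 ≤ ⟪u, y⟫ := hy.2
    have h := inner_orthPart hu y
    simp only [inner_smul_add hu h, orthPart_smul_add hu h, ballHeight_smul_add_orthPart hu]
    have hc := ballHeight_pos hy.1
    conv_rhs => rw [← inner_smul_add_orthPart u y]
    congr 2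
    field_simp
    ring
  continuousOn_toFun := by
    refine .add (.smul (.div (by fun_prop) (by fun_prop) fun x hx ↦ ?_) continuousOn_const)
      (by fun_prop)
    have := (mem_ballDiffHemisphere_iff hu x).1 hx
    linarith
  continuousOn_invFun := by
    refine .add (.smul (.mul (by fun_prop) (.div (by fun_prop) (by fun_prop) fun y hy ↦ ?_))
      continuousOn_const) (by fun_prop)
    have : 0 ≤ ⟪u, y⟫ := hy.2
    linarith

noncomputable def flattenCylinder : PartialHomeomorph E E where
  toFun x := ⟪u, x⟫ • u + (1 - ‖orthPart u x‖)⁻¹ • orthPart u x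
  invFun y := ⟪u, y⟫ • u + (1 + ‖orthPart u y‖)⁻¹ • orthPart u y
  source := {x | ‖orthPart u x‖ < 1} ∩ halfSpace u
  target := halfSpace u
  map_source' x hx := by
    rw [halfSpace, mem_ofPred_eq, inner_smul_add hu (inner_smul_orthPart hu _ x)]
    exact hx.2
  map_target' y hy := by
    have h := inner_smul_orthPart hu (1 + ‖orthPart u y‖)⁻¹ y
    refine ⟨?_, ?_⟩
    · rw [mem_ofPred_eq, orthPart_smul_add hu h, norm_smul, Real.norm_of_nonneg (by positivity),
        inv_mul_lt_one₀ (by positivity)]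
      linarith
    · rw [halfSpace, mem_ofPred_eq, inner_smul_add hu h]
      exact hy
  left_inv' x hx := by
    have h := inner_smul_orthPart hu (1 - ‖orthPart u x‖)⁻¹ x
    have hr : 0 < 1 - ‖orthPart u x‖ := sub_pos.2 hx.1
    rw [inner_smul_add hu h, orthPart_smul_add hu h, norm_smul,
      Real.norm_of_nonneg (inv_nonneg.2 hr.le), smul_smul]
    conv_rhs => rw [← inner_smul_add_orthPart u x]
    congr 1
    convert one_smul ℝ (orthPart u x) using 2
    field_simp
    ring
  right_inv' y hy := by
    have h := inner_smul_orthPart hu (1 + ‖orthPart u y‖)⁻¹ y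
    rw [inner_smul_add hu h, orthPart_smul_add hu h, norm_smul,
      Real.norm_of_nonneg (by positivity), smul_smul]
    conv_rhs => rw [← inner_smul_add_orthPart u y]
    congr 1
    convert one_smul ℝ (orthPart u y) using 2
    field_simp
    ring
  continuousOn_toFun :=
    .add (by fun_prop) (.smul (.inv₀ (by fun_prop) fun x hx ↦ (sub_pos.2 hx.1).ne') (by fun_prop))
  continuousOn_invFun := by
    refine Continuous.continuousOn (.add (by fun_prop) (.smul (.inv₀ (by fun_prop) fun y ↦ ?_)
      (by fun_prop)))
    positivity

noncomputable def ballDiffHemisphereHomeomorph :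
    (closedBall 0 1 \ (sphere 0 1 ∩ halfSpace u) : Set E) ≃ₜ halfSpace u :=
  (straightenBall hu).toHomeomorphSourceTarget.trans (flattenCylinder hu).toHomeomorphSourceTarget

end HalfSpaceModel

theorem stmt_6_general {n : ℕ} (hn : 0 < n) (P F : Set (EuclideanSpace ℝ (Fin n)))
    (hPcomp : IsCompact P) (hPconv : Convex ℝ P) (hPint : (interior P).Nonempty)
    (hFsub : F ⊆ frontier P)
    (e : (frontier P) ≃ₜ (Metric.sphere (0 : EuclideanSpace ℝ (Fin n)) 1))
    (he : (⇑e) '' {x : frontier P | (x : EuclideanSpace ℝ (Fin n)) ∈ F} =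
      {y : Metric.sphere (0 : EuclideanSpace ℝ (Fin n)) 1 |
        0 ≤ (y : EuclideanSpace ℝ (Fin n)) ⟨0, hn⟩}) :
    Nonempty ((P \ F : Set (EuclideanSpace ℝ (Fin n))) ≃ₜ
      {x : EuclideanSpace ℝ (Fin n) | 0 ≤ x ⟨0, hn⟩}) := by
  set u : EuclideanSpace ℝ (Fin n) := EuclideanSpace.single ⟨0, hn⟩ 1
  have hu : ‖u‖ = 1 := by simp [u]
  have hH : halfSpace u = {x : EuclideanSpace ℝ (Fin n) | 0 ≤ x ⟨0, hn⟩} := by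
    ext x
    simp [halfSpace, u, EuclideanSpace.inner_single_left]
  obtain ⟨Φ, hΦP, hΦe⟩ := hPconv.exists_homeomorph_image_closure_eq_closedBall_extending hPint
    hPcomp.isBounded e
  rw [hPcomp.isClosed.closure_eq] at hΦP
  have hΦF : Φ '' F = sphere 0 1 ∩ halfSpace u := by
    rw [← inter_eq_right.2 hFsub, ← Subtype.image_preimage_coe, image_image]
    simp_rw [hΦe]
    rw [← image_image]
    change _ '' (e '' {x | (x : EuclideanSpace ℝ (Fin n)) ∈ F}) = _
    rw [he, hH, ← Subtype.image_preimage_coe]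
    rfl
  have hΦ : Φ '' (P \ F) = closedBall 0 1 \ (sphere 0 1 ∩ halfSpace u) := by
    rw [image_sdiff Φ.injective, hΦP, hΦF]
  exact ⟨((Φ.image _).trans (.setCongr hΦ)).trans
    ((ballDiffHemisphereHomeomorph hu).trans (.setCongr hH))⟩

/-- Removing from a compact convex polytope a closed subset of its boundary
corresponding to a closed hemisphere yields a space homeomorphic to a closed
half-space. -/
theorem stmt_6 {n : ℕ} (hn : 0 < n) (P F : Set (EuclideanSpace ℝ (Fin n)))
    (hPcomp : IsCompact P) (hPconv : Convex ℝ P) (hPint : (interior P).Nonempty)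
    (hpoly : ∃ S : Finset (EuclideanSpace ℝ (Fin n)), P = convexHull ℝ (S : Set (EuclideanSpace ℝ (Fin n))))
    (hFsub : F ⊆ frontier P) (hFclosed : IsClosed F) (hFne : F ≠ frontier P)
    (e : (frontier P) ≃ₜ (Metric.sphere (0 : EuclideanSpace ℝ (Fin n)) 1))
    (he : (⇑e) '' {x : frontier P | (x : EuclideanSpace ℝ (Fin n)) ∈ F} =
      {y : Metric.sphere (0 : EuclideanSpace ℝ (Fin n)) 1 |
        0 ≤ (y : EuclideanSpace ℝ (Fin n)) ⟨0, hn⟩}) :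
    Nonempty ((P \ F : Set (EuclideanSpace ℝ (Fin n))) ≃ₜ
      {x : EuclideanSpace ℝ (Fin n) | 0 ≤ x ⟨0, hn⟩}) :=
  stmt_6_general hn P F hPcomp hPconv hPint hFsub e he
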